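/- arXiv:2602.12169 — 5 statements merged into one kernel-verified Lean document; each statement's English description precedes it below -/
import Mathlib

section
/- Let q ≥ 2 and m_1 ≥ m_2 ≥ ⋯ ≥ m_q ≥ 1, and let G = K_{m_1, m_2, …, m_q} be the complete q-partite graph. Then deg h_G = m_1. In particular, for the complete bipartite graph K_{a,b} with a ≥ b ≥ 1, deg h_{K_{a,b}} = a. -/
open Finset Polynomial

/-- Every subset of a finite type gets a `Fintype` instance (classically). -/
noncomputable instance fintypeOfSet {V : Type*} [Finite V] (s : Set V) : Fintype ↥s :=
  Fintype.ofFinite _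

/-- `s` is an independent set of the graph `G`: no two of its vertices are adjacent. -/
def IsIndepSet {V : Type*} (G : SimpleGraph V) (s : Finset V) : Prop :=
  ∀ u ∈ s, ∀ v ∈ s, ¬ G.Adj u v

/-- The finset of all independent sets of `G`. -/
noncomputable def indepFinsets {V : Type*} [Fintype V] (G : SimpleGraph V) :
    Finset (Finset V) :=
  @Finset.filter _ (fun s => IsIndepSet G s) (Classical.decPred _) Finset.univ

/-- `sCount G i` is the number of independent sets of size `i` in `G`. -/
noncomputable def sCount {V : Type*} [Fintype V] (G : SimpleGraph V) (i : ℕ) : ℕ :=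
  ((indepFinsets G).filter (fun s => s.card = i)).card

/-- The independence number `α(G)`: the maximum size of an independent set. -/
noncomputable def indepNum {V : Type*} [Fintype V] (G : SimpleGraph V) : ℕ :=
  (indepFinsets G).sup Finset.card

/-- The independence polynomial `I(G,t) = Σ_i s_i(G) t^i ∈ ℤ[t]`. -/
noncomputable def indepPoly {V : Type*} [Fintype V] (G : SimpleGraph V) : Polynomial ℤ :=
  ∑ i ∈ Finset.range (indepNum G + 1), Polynomial.C (sCount G i : ℤ) * Polynomial.X ^ i

/-- The h-polynomial of the edge ideal of `G`:
`h_G(t) = Σ_i s_i(G) t^i (1-t)^{α(G)-i} ∈ ℤ[t]`. -/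
noncomputable def hPoly {V : Type*} [Fintype V] (G : SimpleGraph V) : Polynomial ℤ :=
  ∑ i ∈ Finset.range (indepNum G + 1),
    Polynomial.C (sCount G i : ℤ) * Polynomial.X ^ i *
      (1 - Polynomial.X) ^ (indepNum G - i)

/-- The degree of a vertex in a finite simple graph. -/
noncomputable def deg {V : Type*} [Fintype V] (G : SimpleGraph V) (v : V) : ℕ :=
  (@Finset.filter _ (fun u => G.Adj v u) (Classical.decPred _) Finset.univ).card

lemma master {V : Type*} [Fintype V] [DecidableEq V] (G : SimpleGraph V) (q : ℕ) (hq : 2 ≤ q)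
    (p : V → Fin q) (hadj : ∀ u v, G.Adj u v ↔ p u ≠ p v) (M : ℕ)
    (hfib : ∀ j, (Finset.univ.filter (fun v => p v = j)).card ≤ M)
    (hne : ∀ j, (Finset.univ.filter (fun v => p v = j)).Nonempty)
    (hex : ∃ j, (Finset.univ.filter (fun v => p v = j)).card = M) :
    (hPoly G).natDegree = M := by
  classical
  set fib : Fin q → Finset V := fun j => Finset.univ.filter (fun v => p v = j) with hfibdef
  -- membership characterization
  have hmem : ∀ s : Finset V, s ∈ indepFinsets G ↔ ∀ u ∈ s, ∀ v ∈ s, p u = p v := by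
    intro s
    rw [indepFinsets, Finset.mem_filter]
    simp only [Finset.mem_univ, true_and, IsIndepSet]
    constructor
    · intro h u hu v hv
      by_contra hnee
      exact h u hu v hv ((hadj u v).mpr hnee)
    · intro h u hu v hv hA
      exact ((hadj u v).mp hA) (h u hu v hv)
  -- independence number
  have halpha : indepNum G = M := by
    apply le_antisymm
    · apply Finset.sup_le
      intro s hs
      rw [hmem] at hs
      rcases s.eq_empty_or_nonempty with rfl | ⟨v, hv⟩
      · simp
      · have hsub : s ⊆ fib (p v) := fun u hu =>
          Finset.mem_filter.mpr ⟨Finset.mem_univ _, hs u hu v hv⟩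
        exact (Finset.card_le_card hsub).trans (hfib _)
    · obtain ⟨j, hj⟩ := hex
      have hmemj : fib j ∈ indepFinsets G := (hmem _).mpr (fun u hu v hv => by
        rw [(Finset.mem_filter.mp hu).2, (Finset.mem_filter.mp hv).2])
      calc M = (fib j).card := hj.symm
        _ ≤ _ := Finset.le_sup hmemj
  -- sum over independent sets
  have hpowsum : ∀ j, ∑ s ∈ (fib j).powerset, (-1 : ℤ) ^ s.card = 0 := by
    intro j
    have h1 := Finset.prod_add (fun _ : V => (-1 : ℤ)) (fun _ => 1) (fib j)
    simp only [Finset.prod_const, one_pow, mul_one, neg_add_cancel] at h1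
    rw [zero_pow (Finset.card_ne_zero_of_mem (hne j).choose_spec)] at h1
    exact h1.symm
  have hsum : ∑ s ∈ indepFinsets G, (-1 : ℤ) ^ s.card = 1 - q := by
    have hdecomp : indepFinsets G =
        insert ∅ (Finset.univ.biUnion (fun j => ((fib j).powerset).erase ∅)) := by
      ext s
      rw [hmem]
      simp only [Finset.mem_insert, Finset.mem_biUnion, Finset.mem_erase, Finset.mem_powerset,
        Finset.mem_univ, true_and]
      constructor
      · intro h
        rcases s.eq_empty_or_nonempty with rfl | ⟨v, hv⟩
        · exact Or.inl rfl
        · refine Or.inr ⟨p v, ?_, fun u hu =>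
            Finset.mem_filter.mpr ⟨Finset.mem_univ _, h u hu v hv⟩⟩
          exact Finset.nonempty_iff_ne_empty.mp ⟨v, hv⟩
      · rintro (rfl | ⟨j, hne', hsub⟩)
        · simp
        · intro u hu v hv
          rw [(Finset.mem_filter.mp (hsub hu)).2, (Finset.mem_filter.mp (hsub hv)).2]
    have hnotmem : (∅ : Finset V) ∉ Finset.univ.biUnion (fun j => ((fib j).powerset).erase ∅) := by
      simp
    have hdisj : ((Finset.univ : Finset (Fin q)) : Set (Fin q)).PairwiseDisjoint
        (fun j => ((fib j).powerset).erase ∅) := by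
      intro j _ k _ hjk
      simp only [Function.onFun]
      rw [Finset.disjoint_left]
      intro s hs hs'
      obtain ⟨hsne, hsubj⟩ := Finset.mem_erase.mp hs
      obtain ⟨_, hsubk⟩ := Finset.mem_erase.mp hs'
      obtain ⟨v, hv⟩ := Finset.nonempty_iff_ne_empty.mpr hsne
      have h1 := (Finset.mem_filter.mp (Finset.mem_powerset.mp hsubj hv)).2
      have h2 := (Finset.mem_filter.mp (Finset.mem_powerset.mp hsubk hv)).2
      exact hjk (h1 ▸ h2)
    rw [hdecomp, Finset.sum_insert hnotmem, Finset.sum_biUnion hdisj]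
    have hinner : ∀ j ∈ (Finset.univ : Finset (Fin q)),
        ∑ s ∈ ((fib j).powerset).erase ∅, (-1 : ℤ) ^ s.card = -1 := by
      intro j _
      have h0 : (∅ : Finset V) ∈ (fib j).powerset := Finset.empty_mem_powerset _
      have := Finset.add_sum_erase _ (fun s : Finset V => (-1 : ℤ) ^ s.card) h0
      rw [hpowsum j] at this
      simp only [Finset.card_empty, pow_zero] at this
      linarith
    rw [Finset.sum_congr rfl hinner]
    simp [Finset.card_univ]
    ring
  -- fiberwise
  have hcardle : ∀ s ∈ indepFinsets G, s.card ∈ Finset.range (M + 1) := by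
    intro s hs
    rw [Finset.mem_range, Nat.lt_succ_iff, ← halpha]
    exact Finset.le_sup hs
  have hfiber : ∑ i ∈ Finset.range (M + 1), (sCount G i : ℤ) * (-1) ^ i
      = ∑ s ∈ indepFinsets G, (-1 : ℤ) ^ s.card := by
    rw [← Finset.sum_fiberwise_of_maps_to hcardle (fun s => (-1 : ℤ) ^ s.card)]
    refine Finset.sum_congr rfl (fun i _ => ?_)
    have : ∑ s ∈ (indepFinsets G).filter (fun s => s.card = i), (-1 : ℤ) ^ s.card
        = ∑ s ∈ (indepFinsets G).filter (fun s => s.card = i), (-1 : ℤ) ^ i := by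
      refine Finset.sum_congr rfl (fun s hs => ?_)
      rw [(Finset.mem_filter.mp hs).2]
    rw [this, Finset.sum_const, nsmul_eq_mul, sCount]
  -- coefficient at M
  have hXsub : ∀ k : ℕ, ((1 - X : ℤ[X]) ^ k).coeff k = (-1) ^ k := by
    intro k
    have hmon : ((X - C (1 : ℤ)) ^ k).Monic := (Polynomial.monic_X_sub_C 1).pow k
    have hdeg : ((X - C (1 : ℤ)) ^ k).natDegree = k := by
      rw [Polynomial.natDegree_pow, Polynomial.natDegree_X_sub_C, mul_one]
    have hc : ((X - C (1 : ℤ)) ^ k).coeff k = 1 := by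
      nth_rewrite 2 [← hdeg]
      exact hmon.coeff_natDegree
    have h1 : (1 - X : ℤ[X]) ^ k = C ((-1) ^ k) * (X - C 1) ^ k := by
      rw [map_pow, ← mul_pow]
      congr 1
      simp only [map_neg, map_one]
      ring
    rw [h1, Polynomial.coeff_C_mul, hc, mul_one]
  have hcoeff : (hPoly G).coeff M = (-1 : ℤ) ^ M * (1 - q) := by
    rw [hPoly, halpha, Polynomial.finset_sum_coeff]
    have hterm : ∀ i ∈ Finset.range (M + 1),
        (C (sCount G i : ℤ) * X ^ i * (1 - X) ^ (M - i)).coeff M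
          = (sCount G i : ℤ) * (-1) ^ (M - i) := by
      intro i hi
      rw [Finset.mem_range, Nat.lt_succ_iff] at hi
      obtain ⟨k, rfl⟩ : ∃ k, M = k + i := ⟨M - i, by omega⟩
      have hki : k + i - i = k := by omega
      have hcomm : C (sCount G i : ℤ) * X ^ i * (1 - X) ^ (k + i - i)
          = X ^ i * (C (sCount G i : ℤ) * (1 - X) ^ k) := by rw [hki]; ring
      rw [hcomm, Polynomial.coeff_X_pow_mul, Polynomial.coeff_C_mul, hXsub, hki]
    rw [Finset.sum_congr rfl hterm]
    have hsgn : ∀ i ∈ Finset.range (M + 1),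
        (sCount G i : ℤ) * (-1) ^ (M - i) = (-1) ^ M * ((sCount G i : ℤ) * (-1) ^ i) := by
      intro i hi
      rw [Finset.mem_range, Nat.lt_succ_iff] at hi
      have : (-1 : ℤ) ^ (M - i) * (-1) ^ i = (-1) ^ M := by
        rw [← pow_add]; congr 1; omega
      have h2 : (-1 : ℤ) ^ (M - i) = (-1) ^ M * (-1) ^ i := by
        have hu : ((-1 : ℤ) ^ i) * ((-1 : ℤ) ^ i) = 1 := by
          rw [← pow_add, ← two_mul, pow_mul]; norm_num
        calc (-1 : ℤ) ^ (M - i) = (-1) ^ (M - i) * (((-1) ^ i) * ((-1) ^ i)) := by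
              rw [hu, mul_one]
          _ = ((-1) ^ (M - i) * (-1) ^ i) * (-1) ^ i := by ring
          _ = (-1) ^ M * (-1) ^ i := by rw [this]
      rw [h2]; ring
    rw [Finset.sum_congr rfl hsgn, ← Finset.mul_sum, hfiber, hsum]
  -- degree bound
  have hdegle : (hPoly G).natDegree ≤ M := by
    rw [hPoly, halpha]
    apply Polynomial.natDegree_sum_le_of_forall_le
    intro i hi
    rw [Finset.mem_range, Nat.lt_succ_iff] at hi
    have h1 : (1 - X : ℤ[X]).natDegree = 1 := by
      rw [show (1 - X : ℤ[X]) = -(X - C 1) by simp only [map_one]; ring,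
        Polynomial.natDegree_neg, Polynomial.natDegree_X_sub_C]
    calc (C (sCount G i : ℤ) * X ^ i * (1 - X) ^ (M - i)).natDegree
        ≤ (C (sCount G i : ℤ) * X ^ i).natDegree + ((1 - X : ℤ[X]) ^ (M - i)).natDegree :=
          Polynomial.natDegree_mul_le
      _ ≤ (i + (M - i) * 1) := by
          gcongr
          · exact (Polynomial.natDegree_C_mul_le _ _).trans (by simp)
          · exact (Polynomial.natDegree_pow_le).trans (by rw [h1])
      _ ≤ M := by omega
  have hne0 : (hPoly G).coeff M ≠ 0 := by
    rw [hcoeff]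
    have h1 : (1 : ℤ) - q ≠ 0 := by
      have : (2 : ℤ) ≤ q := by exact_mod_cast hq
      omega
    exact mul_ne_zero (pow_ne_zero _ (by norm_num)) h1
  exact le_antisymm hdegle (Polynomial.le_natDegree_of_ne_zero hne0)


/-- For the complete `q`-partite graph `K_{m_1,…,m_q}` with `q ≥ 2` and
`m_1 ≥ m_2 ≥ ⋯ ≥ m_q ≥ 1`, `deg h_G = m_1`.  In particular,
`deg h_{K_{a,b}} = a` for `a ≥ b ≥ 1`. -/
theorem degree_hPoly_completeMultipartite (q : ℕ) (hq : 2 ≤ q) (m : Fin q → ℕ)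
    (hmono : ∀ i j : Fin q, i ≤ j → m j ≤ m i) (hpos : ∀ i, 1 ≤ m i) :
    (hPoly (SimpleGraph.completeMultipartiteGraph (fun i => Fin (m i)))).natDegree = m ⟨0, by omega⟩ ∧
    (∀ a b : ℕ, 1 ≤ b → b ≤ a →
      (hPoly (completeBipartiteGraph (Fin a) (Fin b))).natDegree = a) := by
  constructor
  · -- complete multipartite
    have hcard : ∀ j : Fin q,
        (Finset.univ.filter (fun v : (i : Fin q) × Fin (m i) => v.1 = j)).card = m j := by
      intro j
      have hset : (Finset.univ.filter (fun v : (i : Fin q) × Fin (m i) => v.1 = j))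
          = Finset.univ.map ⟨Sigma.mk j, sigma_mk_injective⟩ := by
        ext ⟨i, x⟩
        simp only [Finset.mem_filter, Finset.mem_univ, true_and, Finset.mem_map,
          Function.Embedding.coeFn_mk]
        constructor
        · rintro rfl
          exact ⟨x, rfl⟩
        · rintro ⟨y, hy⟩
          cases hy
          rfl
      rw [hset, Finset.card_map, Finset.card_univ, Fintype.card_fin]
    refine master _ q hq (fun v => v.1) (fun u v => Iff.rfl) _ ?_ ?_ ?_
    · intro j
      rw [hcard j]
      exact hmono ⟨0, by omega⟩ j (by simp [Fin.le_def])
    · intro j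
      exact ⟨⟨j, ⟨0, hpos j⟩⟩, by simp⟩
    · exact ⟨⟨0, by omega⟩, hcard _⟩
  · -- complete bipartite
    intro a b hb hba
    set p : Fin a ⊕ Fin b → Fin 2 := Sum.elim (fun _ => 0) (fun _ => 1) with hp
    have hc0 : (Finset.univ.filter (fun v : Fin a ⊕ Fin b => p v = 0)).card = a := by
      have hset : (Finset.univ.filter (fun v : Fin a ⊕ Fin b => p v = 0))
          = Finset.univ.map ⟨Sum.inl, Sum.inl_injective⟩ := by
        ext v
        rcases v with v | v <;>
          simp [hp]
      rw [hset, Finset.card_map, Finset.card_univ, Fintype.card_fin]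
    have hc1 : (Finset.univ.filter (fun v : Fin a ⊕ Fin b => p v = 1)).card = b := by
      have hset : (Finset.univ.filter (fun v : Fin a ⊕ Fin b => p v = 1))
          = Finset.univ.map ⟨Sum.inr, Sum.inr_injective⟩ := by
        ext v
        rcases v with v | v <;>
          simp [hp]
      rw [hset, Finset.card_map, Finset.card_univ, Fintype.card_fin]
    refine master _ 2 le_rfl p ?_ a ?_ ?_ ⟨0, hc0⟩
    · intro u v
      rcases u with u | u <;> rcases v with v | v <;>
        simp [completeBipartiteGraph, hp]
    · intro j
      fin_cases j
      · simp only [Fin.zero_eta]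
        rw [hc0]
      · simp only [Fin.mk_one]
        rw [hc1]; exact hba
    · intro j
      fin_cases j
      · exact ⟨Sum.inl ⟨0, by omega⟩, by simp [hp]⟩
      · exact ⟨Sum.inr ⟨0, by omega⟩, by simp [hp]⟩
end

section
/- Let G be a finite simple connected bipartite graph with bipartition (U, V), where V ≠ ∅, such that every vertex of V is adjacent to at least one leaf of G. Then deg h_G = α(G). -/
open Finset Polynomial

-- ===================== auxiliary lemmas =====================

lemma mem_indepFinsets {W : Type*} [Fintype W] {G : SimpleGraph W} {A : Finset W} :
    A ∈ indepFinsets G ↔ IsIndepSet G A := by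
  simp [indepFinsets]

lemma isIndepSet_subset {W : Type*} {G : SimpleGraph W} {A B : Finset W}
    (h : IsIndepSet G A) (hBA : B ⊆ A) : IsIndepSet G B :=
  fun u hu v hv => h u (hBA hu) v (hBA hv)

/-- the key involution lemma -/
lemma key_zero {W : Type*} [Fintype W] [LinearOrder W] (G : SimpleGraph W)
    (F : Finset W) (uf : W → W)
    (hFind : IsIndepSet G F)
    (hadj : ∀ v ∈ F, G.Adj v (uf v))
    (hnbr : ∀ v ∈ F, ∀ w, G.Adj (uf v) w → w = v)
    (hout : ∀ w, w ∉ F → ∀ x, G.Adj w x → x ∈ F)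
    (hnolone : ∀ w, w ∉ F → ∃ x, G.Adj w x) :
    ∑ A ∈ (indepFinsets G).erase F, (-1 : ℤ) ^ A.card = 0 := by
  classical
  have hufF : ∀ v ∈ F, uf v ∉ F := fun v hv hmem => hFind v hv (uf v) hmem (hadj v hv)
  have huinj : ∀ v₁ ∈ F, ∀ v₂ ∈ F, uf v₁ = uf v₂ → v₁ = v₂ := by
    intro v₁ h₁ v₂ h₂ he
    exact (hnbr v₁ h₁ v₂ (he ▸ (hadj v₂ h₂).symm)).symm
  set free : Finset W → Finset W := fun A => F.filter (fun v => uf v ∈ A ∨ v ∉ A) with hfree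
  -- non-emptiness of the free set
  have hfree_ne : ∀ A ∈ (indepFinsets G).erase F, (free A).Nonempty := by
    intro A hA
    rw [Finset.mem_erase] at hA
    obtain ⟨hne, hind⟩ := hA
    have hindA : IsIndepSet G A := mem_indepFinsets.1 hind
    by_contra hemp
    rw [Finset.not_nonempty_iff_eq_empty, Finset.eq_empty_iff_forall_notMem] at hemp
    have hcond : ∀ v ∈ F, uf v ∉ A ∧ v ∈ A := by
      intro v hv
      have := hemp v
      simp only [hfree, Finset.mem_filter, hv, true_and] at this
      push_neg at this
      exact this
    have hFA : F ⊆ A := fun v hv => (hcond v hv).2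
    have hAF : A ⊆ F := by
      intro w hw
      by_contra hwF
      obtain ⟨x, hx⟩ := hnolone w hwF
      exact hindA w hw x (hFA (hout w hwF x hx)) hx
    exact hne (Finset.Subset.antisymm hAF hFA)
  -- the toggle map
  set g : Finset W → Finset W := fun A =>
    if h : (free A).Nonempty then
      (if uf ((free A).min' h) ∈ A then A.erase (uf ((free A).min' h))
        else insert (uf ((free A).min' h)) A)
    else A with hg
  have hgdef : ∀ A (h : (free A).Nonempty),
      g A = (if uf ((free A).min' h) ∈ A then A.erase (uf ((free A).min' h))
        else insert (uf ((free A).min' h)) A) := by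
    intro A h; simp only [hg, dif_pos h]
  -- main membership/cardinality facts
  have main : ∀ A ∈ (indepFinsets G).erase F,
      (g A ∈ (indepFinsets G).erase F) ∧ (g A).card = A.card + 1 ∨
      (g A ∈ (indepFinsets G).erase F) ∧ A.card = (g A).card + 1 := by
    intro A hA
    have h := hfree_ne A hA
    rw [Finset.mem_erase] at hA
    obtain ⟨hne, hind⟩ := hA
    have hindA : IsIndepSet G A := mem_indepFinsets.1 hind
    set v := (free A).min' h with hv
    have hvmem : v ∈ free A := Finset.min'_mem _ _
    rw [hfree, Finset.mem_filter] at hvmem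
    obtain ⟨hvF, hvcond⟩ := hvmem
    rw [hgdef A h, ← hv]
    by_cases hcase : uf v ∈ A
    · -- erase case
      rw [if_pos hcase]
      have hvA : v ∉ A := fun hvA => hindA v hvA (uf v) hcase (hadj v hvF)
      refine Or.inr ⟨?_, ?_⟩
      · rw [Finset.mem_erase]
        constructor
        · intro heq
          exact hvA (by rw [← heq] at hvF; exact Finset.mem_of_mem_erase hvF)
        · exact mem_indepFinsets.2 (isIndepSet_subset hindA (Finset.erase_subset _ _))
      · rw [Finset.card_erase_of_mem hcase]
        have : 0 < A.card := Finset.card_pos.2 ⟨_, hcase⟩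
        omega
    · -- insert case
      rw [if_neg hcase]
      have hvA : v ∉ A := hvcond.resolve_left hcase
      refine Or.inl ⟨?_, ?_⟩
      · rw [Finset.mem_erase]
        constructor
        · intro heq
          exact hufF v hvF (heq ▸ Finset.mem_insert_self (uf v) A)
        · refine mem_indepFinsets.2 ?_
          intro a ha b hb hab
          rcases Finset.mem_insert.1 ha with rfl | ha'
          · rcases Finset.mem_insert.1 hb with rfl | hb'
            · exact G.loopless.irrefl _ hab
            · exact hvA ((hnbr v hvF b hab) ▸ hb')
          · rcases Finset.mem_insert.1 hb with rfl | hb'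
            · exact hvA ((hnbr v hvF a hab.symm) ▸ ha')
            · exact hindA a ha' b hb' hab
      · rw [Finset.card_insert_of_notMem hcase]
  -- the free set is unchanged by the toggle
  have hfree_g : ∀ A ∈ (indepFinsets G).erase F, free (g A) = free A := by
    intro A hA
    have h := hfree_ne A hA
    rw [Finset.mem_erase] at hA
    obtain ⟨hne, hind⟩ := hA
    have hindA : IsIndepSet G A := mem_indepFinsets.1 hind
    set v := (free A).min' h with hv
    have hvmem : v ∈ free A := Finset.min'_mem _ _
    rw [hfree, Finset.mem_filter] at hvmem
    obtain ⟨hvF, hvcond⟩ := hvmem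
    rw [hgdef A h, ← hv]
    by_cases hcase : uf v ∈ A
    · rw [if_pos hcase]
      have hvA : v ∉ A := fun hvA => hindA v hvA (uf v) hcase (hadj v hvF)
      simp only [hfree]
      apply Finset.filter_congr
      intro x hxF
      by_cases hx : x = v
      · subst hx
        constructor
        · intro _; exact Or.inr hvA
        · intro _; exact Or.inr (fun hmem => hvA (Finset.mem_of_mem_erase hmem))
      · have h1 : uf x ≠ uf v := fun he => hx (huinj x hxF v hvF he)
        have h2 : x ≠ uf v := fun he => hufF v hvF (he ▸ hxF)
        simp [Finset.mem_erase, h1, h2]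
    · rw [if_neg hcase]
      have hvA : v ∉ A := hvcond.resolve_left hcase
      simp only [hfree]
      apply Finset.filter_congr
      intro x hxF
      by_cases hx : x = v
      · subst hx
        constructor
        · intro _; exact Or.inr hvA
        · intro _; exact Or.inl (Finset.mem_insert_self _ _)
      · have h1 : uf x ≠ uf v := fun he => hx (huinj x hxF v hvF he)
        have h2 : x ≠ uf v := fun he => hufF v hvF (he ▸ hxF)
        simp [Finset.mem_insert, h1, h2]
  -- involution
  have hginv : ∀ A ∈ (indepFinsets G).erase F, g (g A) = A := by
    intro A hA
    have h := hfree_ne A hA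
    have hfg := hfree_g A hA
    have h2 : (free (g A)).Nonempty := hfg ▸ h
    set v := (free A).min' h with hv
    have hveq : (free (g A)).min' h2 = v := by rw [hv]; simp only [hfg]
    rw [hgdef (g A) h2, hveq]
    by_cases hcase : uf v ∈ A
    · have hGA : g A = A.erase (uf v) := by rw [hgdef A h, ← hv, if_pos hcase]
      rw [hGA, if_neg (Finset.notMem_erase _ _)]
      rw [Finset.insert_erase hcase]
    · have hGA : g A = insert (uf v) A := by rw [hgdef A h, ← hv, if_neg hcase]
      rw [hGA, if_pos (Finset.mem_insert_self _ _)]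
      rw [Finset.erase_insert hcase]
  -- apply the involution principle
  refine Finset.sum_involution (fun A _ => g A) ?_ ?_ ?_ ?_
  · intro A hA
    rcases main A hA with ⟨_, hc⟩ | ⟨_, hc⟩
    · rw [hc, pow_succ]; ring
    · rw [hc, pow_succ]; ring
  · intro A hA _ heq
    have heq' : g A = A := heq
    rcases main A hA with ⟨_, hc⟩ | ⟨_, hc⟩ <;> rw [heq'] at hc <;> omega
  · intro A hA
    rcases main A hA with ⟨hm, _⟩ | ⟨hm, _⟩ <;> exact hm
  · intro A hA
    exact hginv A hA

lemma key_sum {W : Type*} [Fintype W] [LinearOrder W] (G : SimpleGraph W)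
    (F : Finset W) (uf : W → W)
    (hFind : IsIndepSet G F)
    (hadj : ∀ v ∈ F, G.Adj v (uf v))
    (hnbr : ∀ v ∈ F, ∀ w, G.Adj (uf v) w → w = v)
    (hout : ∀ w, w ∉ F → ∀ x, G.Adj w x → x ∈ F)
    (hnolone : ∀ w, w ∉ F → ∃ x, G.Adj w x) :
    ∑ A ∈ indepFinsets G, (-1 : ℤ) ^ A.card = (-1) ^ F.card := by
  have hF : F ∈ indepFinsets G := mem_indepFinsets.2 hFind
  rw [← Finset.add_sum_erase _ _ hF,
    key_zero G F uf hFind hadj hnbr hout hnolone, add_zero]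

lemma coeff_term (c : ℤ) (i n : ℕ) (hi : i ≤ n) :
    (Polynomial.C c * Polynomial.X ^ i * (1 - Polynomial.X) ^ (n - i)).coeff n
      = c * (-1) ^ (n - i) := by
  set m := n - i with hm
  have hmn : m + i = n := by omega
  have h1 : (Polynomial.C c * Polynomial.X ^ i * (1 - Polynomial.X) ^ m : Polynomial ℤ)
      = Polynomial.C c * ((1 - Polynomial.X) ^ m * Polynomial.X ^ i) := by ring
  rw [h1, Polynomial.coeff_C_mul, ← hmn, Polynomial.coeff_mul_X_pow]
  have h2 : ((1 : Polynomial ℤ) - Polynomial.X) ^ m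
      = Polynomial.C ((-1) ^ m) * (Polynomial.X - Polynomial.C 1) ^ m := by
    rw [map_pow, map_neg, map_one, ← mul_pow]
    ring_nf
  rw [h2, Polynomial.coeff_C_mul]
  have h3 : ((Polynomial.X - Polynomial.C (1:ℤ)) ^ m).natDegree = m := by
    rw [Polynomial.natDegree_pow, Polynomial.natDegree_X_sub_C, mul_one]
  have h4 := ((Polynomial.monic_X_sub_C (1:ℤ)).pow m).coeff_natDegree
  rw [h3] at h4
  rw [h4, mul_one]

lemma hPoly_natDegree_le {V : Type*} [Fintype V] (G : SimpleGraph V) :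
    (hPoly G).natDegree ≤ indepNum G := by
  apply Polynomial.natDegree_sum_le_of_forall_le
  intro i hi
  rw [Finset.mem_range] at hi
  have h1 : (1 - Polynomial.X : Polynomial ℤ).natDegree = 1 := by
    have : (1 - Polynomial.X : Polynomial ℤ) = -(Polynomial.X - Polynomial.C 1) := by rw [Polynomial.C_1]; ring
    rw [this, Polynomial.natDegree_neg, Polynomial.natDegree_X_sub_C]
  calc (Polynomial.C ((sCount G i : ℤ)) * Polynomial.X ^ i *
        (1 - Polynomial.X) ^ (indepNum G - i)).natDegree
      ≤ (Polynomial.C ((sCount G i : ℤ)) * Polynomial.X ^ i).natDegree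
        + ((1 - Polynomial.X : Polynomial ℤ) ^ (indepNum G - i)).natDegree :=
        Polynomial.natDegree_mul_le
    _ ≤ (0 + i) + (indepNum G - i) * 1 := by
        apply Nat.add_le_add
        · exact le_trans Polynomial.natDegree_mul_le
            (by simp [Polynomial.natDegree_C, Polynomial.natDegree_X_pow])
        · exact le_trans (Polynomial.natDegree_pow_le) (by rw [h1])
    _ ≤ indepNum G := by omega

lemma hPoly_coeff_top {V : Type*} [Fintype V] (G : SimpleGraph V) :
    (hPoly G).coeff (indepNum G)
      = ∑ i ∈ Finset.range (indepNum G + 1),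
          (sCount G i : ℤ) * (-1) ^ (indepNum G - i) := by
  rw [hPoly, Polynomial.finset_sum_coeff]
  apply Finset.sum_congr rfl
  intro i hi
  rw [Finset.mem_range] at hi
  exact coeff_term _ _ _ (by omega)

lemma sum_signed {V : Type*} [Fintype V] (G : SimpleGraph V) :
    ∑ i ∈ Finset.range (indepNum G + 1), (sCount G i : ℤ) * (-1) ^ i
      = ∑ A ∈ indepFinsets G, (-1 : ℤ) ^ A.card := by
  classical
  rw [← Finset.sum_fiberwise_of_maps_to (g := Finset.card) (t := Finset.range (indepNum G + 1))
    (fun A hA => Finset.mem_range.2 (Nat.lt_succ_of_le (Finset.le_sup hA)))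
    (fun A => (-1 : ℤ) ^ A.card)]
  apply Finset.sum_congr rfl
  intro i _
  rw [sCount]
  rw [Finset.sum_congr (Finset.filter_congr (fun A _ => Iff.rfl))
    (fun A hA => by rw [(Finset.mem_filter.1 hA).2])]
  rw [Finset.sum_const, nsmul_eq_mul]

lemma deg_one_unique {W : Type*} [Fintype W] {G : SimpleGraph W} {x : W} (h : deg G x = 1)
    {a b : W} (ha : G.Adj x a) (hb : G.Adj x b) : a = b := by
  classical
  rw [deg, Finset.card_eq_one] at h
  obtain ⟨c, hc⟩ := h
  have ha' : a ∈ @Finset.filter _ (fun u => G.Adj x u) (Classical.decPred _) Finset.univ :=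
    Finset.mem_filter.2 ⟨Finset.mem_univ _, ha⟩
  have hb' : b ∈ @Finset.filter _ (fun u => G.Adj x u) (Classical.decPred _) Finset.univ :=
    Finset.mem_filter.2 ⟨Finset.mem_univ _, hb⟩
  rw [hc, Finset.mem_singleton] at ha' hb'
  rw [ha', hb']

/-- Let `G` be a finite simple connected bipartite graph with bipartition
`(U, V)` (`V ≠ ∅`) such that every vertex of `V` is adjacent to at least one leaf of `G`.
Then `deg h_G = α(G)`.  Here the part `V` is encoded as a set `s` of vertices, with
`U = sᶜ`, both parts being independent sets. -/
theorem degree_hPoly_of_whiskered_bipartite {W : Type*} [Fintype W] (G : SimpleGraph W)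
    (hconn : G.Connected) (s : Set W) (hs : s.Nonempty)
    (hU : ∀ u ∈ sᶜ, ∀ v ∈ sᶜ, ¬ G.Adj u v)
    (hV : ∀ u ∈ s, ∀ v ∈ s, ¬ G.Adj u v)
    (hwhisker : ∀ v ∈ s, ∃ u, G.Adj v u ∧ deg G u = 1) :
    (hPoly G).natDegree = indepNum G := by
  classical
  letI : LinearOrder W := LinearOrder.lift' (Fintype.equivFin W) (Fintype.equivFin W).injective
  set F : Finset W := s.toFinset with hFdef
  set uf : W → W := fun v => if h : ∃ u, G.Adj v u ∧ deg G u = 1 then h.choose else v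
    with hufdef
  have hspec : ∀ v ∈ F, G.Adj v (uf v) ∧ deg G (uf v) = 1 := by
    intro v hv
    have hv' : v ∈ s := Set.mem_toFinset.1 hv
    have hex := hwhisker v hv'
    simp only [hufdef, dif_pos hex]
    exact hex.choose_spec
  have hFind : IsIndepSet G F := fun u hu v hv =>
    hV u (Set.mem_toFinset.1 hu) v (Set.mem_toFinset.1 hv)
  have hadj : ∀ v ∈ F, G.Adj v (uf v) := fun v hv => (hspec v hv).1
  have hnbr : ∀ v ∈ F, ∀ w, G.Adj (uf v) w → w = v := fun v hv w hw =>
    deg_one_unique (hspec v hv).2 hw (hadj v hv).symm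
  have hout : ∀ w, w ∉ F → ∀ x, G.Adj w x → x ∈ F := by
    intro w hw x hx
    by_contra hxF
    exact hU w ((Set.mem_compl_iff s w).2 (fun hws => hw (Set.mem_toFinset.2 hws)))
      x ((Set.mem_compl_iff s x).2 (fun hxs => hxF (Set.mem_toFinset.2 hxs))) hx
  have hnolone : ∀ w, w ∉ F → ∃ x, G.Adj w x := by
    intro w hw
    obtain ⟨v₀, hv₀⟩ := hs
    have hne : w ≠ v₀ := fun h => hw (Set.mem_toFinset.2 (h ▸ hv₀))
    obtain ⟨p⟩ := hconn.preconnected w v₀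
    cases p with
    | nil => exact absurd rfl hne
    | cons h _ => exact ⟨_, h⟩
  have hsum := key_sum G F uf hFind hadj hnbr hout hnolone
  have hcoeff : (hPoly G).coeff (indepNum G) = (-1) ^ (indepNum G) * (-1) ^ F.card := by
    rw [hPoly_coeff_top]
    have hstep : ∀ i ∈ Finset.range (indepNum G + 1),
        (sCount G i : ℤ) * (-1) ^ (indepNum G - i)
          = (-1 : ℤ) ^ indepNum G * ((sCount G i : ℤ) * (-1) ^ i) := by
      intro i hi
      rw [Finset.mem_range] at hi
      have hii : i ≤ indepNum G := by omega
      have hpow : ((-1 : ℤ)) ^ (indepNum G - i) = (-1) ^ indepNum G * (-1) ^ i := by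
        have h2 : ((-1:ℤ) ^ i) * ((-1:ℤ) ^ i) = 1 := by
          rw [← pow_add, ← two_mul, pow_mul]; norm_num
        calc ((-1:ℤ)) ^ (indepNum G - i)
            = (-1) ^ (indepNum G - i) * ((-1) ^ i * (-1) ^ i) := by rw [h2, mul_one]
          _ = ((-1) ^ (indepNum G - i) * (-1) ^ i) * (-1) ^ i := by ring
          _ = (-1) ^ indepNum G * (-1) ^ i := by rw [← pow_add, Nat.sub_add_cancel hii]
      rw [hpow]; ring
    rw [Finset.sum_congr rfl hstep, ← Finset.mul_sum, sum_signed, hsum]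
  refine le_antisymm (hPoly_natDegree_le G) (Polynomial.le_natDegree_of_ne_zero ?_)
  rw [hcoeff]
  exact mul_ne_zero (pow_ne_zero _ (by norm_num)) (pow_ne_zero _ (by norm_num))
end

section
/- Let m, n ≥ 1 and let K_{m,n} be the complete bipartite graph with parts U (|U| = m) and V (|V| = n). Let a_1, …, a_k be distinct edges of K_{m,n}, where a_i = {u_i, v_i} with u_i ∈ U and v_i ∈ V. Set G_0 = K_{m,n} and G_i = G_{i−1} − a_i (edge deletion) for i = 1, …, k, and let G = G_k. Then I(G, −1) = Σ_{i=1}^{k} I( G_{i−1} − (N_{G_{i−1}}(u_i) ∪ N_{G_{i−1}}(v_i)), −1 ) − 1, where G_{i−1} − W denotes the induced subgraph on the complement of the vertex set W and N_H(x) is the set of neighbors of x in H. Consequently, if in addition every vertex of G has degree at least 2, then deg h_G = α(G) if and only if Σ_{i=1}^{k} I( G_{i−1} − (N_{G_{i−1}}(u_i) ∪ N_{G_{i−1}}(v_i)), −1 ) ≠ 1. -/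
open Finset Polynomial

/-- `kmnDel m n u v i` is the graph `G_i` obtained from the complete bipartite graph
`K_{m,n}` by deleting the first `i` of the edges `a_j = {u_j, v_j}`. -/
def kmnDel (m n : ℕ) (u : ℕ → Fin m) (v : ℕ → Fin n) (i : ℕ) :
    SimpleGraph (Fin m ⊕ Fin n) :=
  (completeBipartiteGraph (Fin m) (Fin n)).deleteEdges
    {e | ∃ j < i, e = s(Sum.inl (u j), Sum.inr (v j))}

/-!
Splitting the independent sets of `G - ab` according to whether they contain both `a` and `b`
gives the deletion rule `I(G - ab, t) = I(G, t) + t² I(G - (N(a) ∪ N(b)), t)`; at `t = -1` each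
deleted edge `a_i` thus contributes the term `I(G_{i-1} - (N(u_i) ∪ N(v_i)), -1)`. The independent
sets of `K_{m,n}` are the subsets of one side, so `I(K_{m,n}, t) = (1 + t)^m + (1 + t)^n - 1`,
which is `-1` at `t = -1`.

The coefficient of `t^α` in `h_G` is `(-1)^α I(G, -1)`, and `deg h_G ≤ α` while `h_G(0) = 1`;
hence `deg h_G = α` exactly when `I(G, -1) ≠ 0`.
-/

section IndepPoly

variable {V : Type*} [Fintype V] (G : SimpleGraph V)

lemma mem_indepFinsets_s15 {S : Finset V} : S ∈ indepFinsets G ↔ IsIndepSet G S := by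
  classical
  simp [indepFinsets]

lemma indepPoly_eq_sum_indepFinsets : indepPoly G = ∑ S ∈ indepFinsets G, X ^ S.card := by
  classical
  have hcard : ∀ S ∈ indepFinsets G, S.card ∈ range (indepNum G + 1) := fun S hS =>
    mem_range_succ_iff.2 (le_sup hS)
  rw [indepPoly, ← sum_fiberwise_of_maps_to hcard]
  refine sum_congr rfl fun i _ => ?_
  rw [sum_congr rfl fun S hS => by rw [(mem_filter.1 hS).2], sum_const, nsmul_eq_mul, sCount,
    map_natCast]

lemma indepPoly_induce (s : Set V) [DecidablePred (· ∈ s)] :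
    indepPoly (G.induce s) = ∑ S ∈ indepFinsets G with ∀ x ∈ S, x ∈ s, X ^ S.card := by
  rw [indepPoly_eq_sum_indepFinsets]
  refine sum_nbij' (fun T => T.map (Function.Embedding.subtype _)) (fun S => S.subtype (· ∈ s))
    ?_ ?_ ?_ ?_ fun T _ => by rw [card_map]
  · intro T hT
    simp only [mem_indepFinsets_s15, mem_filter] at hT ⊢
    refine ⟨?_, ?_⟩
    · intro x hx y hy
      obtain ⟨x', hx', rfl⟩ := mem_map.1 hx
      obtain ⟨y', hy', rfl⟩ := mem_map.1 hy
      exact hT x' hx' y' hy'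
    · intro x hx
      obtain ⟨x, -, rfl⟩ := mem_map.1 hx
      exact x.2
  · intro S hS
    simp only [mem_indepFinsets_s15, mem_filter] at hS ⊢
    intro x hx y hy
    exact hS.1 x (mem_subtype.1 hx) y (mem_subtype.1 hy)
  · intro T _
    ext x
    simp
  · intro S hS
    exact subtype_map_of_mem (mem_filter.1 hS).2

end IndepPoly

section DeleteEdge

variable {V : Type*} {G : SimpleGraph V} {a b : V}

lemma isIndepSet_deleteEdges_iff {S : Finset V} :
    IsIndepSet (G.deleteEdges {s(a, b)}) S ↔
      ∀ x ∈ S, ∀ y ∈ S, G.Adj x y → s(x, y) = s(a, b) := by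
  simp only [IsIndepSet, SimpleGraph.deleteEdges_adj, Set.mem_singleton_iff, not_and_not_right]

variable [DecidableEq V]

lemma isIndepSet_deleteEdges_insert_insert_iff (hab : G.Adj a b) {T : Finset V} (ha : a ∉ T)
    (hb : b ∉ T) :
    IsIndepSet (G.deleteEdges {s(a, b)}) (insert a (insert b T)) ↔
      IsIndepSet G T ∧ ∀ x ∈ T, ¬G.Adj a x ∧ ¬G.Adj b x := by
  have hba := hab.symm
  rw [isIndepSet_deleteEdges_iff]
  simp only [forall_mem_insert, Sym2.eq_iff, IsIndepSet]
  constructor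
  · intro h
    refine ⟨fun x hx y hy hxy => ?_, fun x hx => ⟨fun h' => ?_, fun h' => ?_⟩⟩ <;> grind
  · rintro ⟨hT, hN⟩
    refine ⟨⟨?_, ?_, ?_⟩, ⟨?_, ?_, ?_⟩, ?_⟩ <;> grind [SimpleGraph.irrefl, SimpleGraph.adj_comm]

variable [Fintype V]

lemma filter_not_pair_indepFinsets_deleteEdges (hab : G.Adj a b) :
    (indepFinsets (G.deleteEdges {s(a, b)})).filter (fun S => ¬(a ∈ S ∧ b ∈ S)) =
      indepFinsets G := by
  ext S
  simp only [mem_filter, mem_indepFinsets_s15, isIndepSet_deleteEdges_iff]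
  constructor
  · rintro ⟨hS, hab'⟩ x hx y hy hxy
    rcases Sym2.eq_iff.1 (hS x hx y hy hxy) with ⟨rfl, rfl⟩ | ⟨rfl, rfl⟩
    exacts [hab' ⟨hx, hy⟩, hab' ⟨hy, hx⟩]
  · intro hS
    exact ⟨fun x hx y hy hxy => absurd hxy (hS x hx y hy), fun h => hS a h.1 b h.2 hab⟩

lemma filter_pair_indepFinsets_deleteEdges [DecidableRel G.Adj] (hab : G.Adj a b) :
    (indepFinsets (G.deleteEdges {s(a, b)})).filter (fun S => a ∈ S ∧ b ∈ S) =
      ((indepFinsets G).filter fun T => ∀ x ∈ T, ¬G.Adj a x ∧ ¬G.Adj b x).image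
        fun T => insert a (insert b T) := by
  ext S
  simp only [mem_filter, mem_image, mem_indepFinsets_s15]
  constructor
  · rintro ⟨hS, ha, hb⟩
    have hS' : insert a (insert b ((S.erase a).erase b)) = S := by
      rw [insert_erase (mem_erase.2 ⟨hab.ne.symm, hb⟩), insert_erase ha]
    refine ⟨(S.erase a).erase b, ?_, hS'⟩
    rw [← isIndepSet_deleteEdges_insert_insert_iff hab (by simp) (by simp), hS']
    exact hS
  · rintro ⟨T, hT, rfl⟩
    have ha : a ∉ T := fun h => (hT.2 a h).2 hab.symm
    have hb : b ∉ T := fun h => (hT.2 b h).1 hab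
    exact ⟨(isIndepSet_deleteEdges_insert_insert_iff hab ha hb).2 hT, mem_insert_self _ _,
      mem_insert_of_mem (mem_insert_self _ _)⟩

end DeleteEdge

theorem indepPoly_deleteEdges_of_adj {V : Type*} [Fintype V] {G : SimpleGraph V} {a b : V}
    (hab : G.Adj a b) :
    indepPoly (G.deleteEdges {s(a, b)}) =
      indepPoly G + X ^ 2 * indepPoly (G.induce (G.neighborSet a ∪ G.neighborSet b)ᶜ) := by
  classical
  set 𝒯 := (indepFinsets G).filter fun T => ∀ x ∈ T, ¬G.Adj a x ∧ ¬G.Adj b x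
  have hnotMem : ∀ T : Finset V, (∀ x ∈ T, ¬G.Adj a x ∧ ¬G.Adj b x) → a ∉ insert b T ∧ b ∉ T :=
    fun T hT => ⟨by grind [hab.ne, hab.symm], fun h => (hT b h).1 hab⟩
  have hinj : Set.InjOn (fun T => insert a (insert b T)) (𝒯 : Set (Finset V)) := by
    intro T hT T' hT' h
    obtain ⟨haT, hbT⟩ := hnotMem T (mem_filter.1 hT).2
    obtain ⟨haT', hbT'⟩ := hnotMem T' (mem_filter.1 hT').2
    simpa [erase_insert haT, erase_insert haT', erase_insert hbT, erase_insert hbT'] using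
      congrArg (fun S => (S.erase a).erase b) h
  rw [indepPoly_eq_sum_indepFinsets, ← sum_filter_not_add_sum_filter _ (fun S => a ∈ S ∧ b ∈ S),
    filter_not_pair_indepFinsets_deleteEdges hab, filter_pair_indepFinsets_deleteEdges hab,
    sum_image hinj, indepPoly_induce, indepPoly_eq_sum_indepFinsets, mul_sum]
  refine congrArg _ (sum_congr (by ext T; simp [𝒯]) fun T hT => ?_)
  have hT' : ∀ x ∈ T, ¬G.Adj a x ∧ ¬G.Adj b x := by
    simp only [mem_filter] at hT
    simpa using hT.2
  rw [card_insert_of_notMem (hnotMem T hT').1, card_insert_of_notMem (hnotMem T hT').2]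
  ring

section CompleteBipartite

variable {α β : Type*} [Fintype α] [Fintype β]

lemma isIndepSet_completeBipartiteGraph_iff {S : Finset (α ⊕ β)} :
    IsIndepSet (completeBipartiteGraph α β) S ↔
      S ⊆ univ.map .inl ∨ S ⊆ univ.map .inr := by
  simp only [IsIndepSet, subset_iff, mem_map, mem_univ, true_and]
  constructor
  · intro h
    by_contra! hS
    obtain ⟨⟨x, hx, hxl⟩, ⟨y, hy, hyr⟩⟩ := hS
    obtain ⟨b, rfl⟩ : ∃ b, x = .inr b := by cases x <;> simp_all
    obtain ⟨a, rfl⟩ : ∃ a, y = .inl a := by cases y <;> simp_all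
    exact h _ hy _ hx (by simp)
  · rintro (h | h) x hx y hy <;>
      obtain ⟨x, rfl⟩ := h hx <;> obtain ⟨y, rfl⟩ := h hy <;> simp

lemma indepPoly_completeBipartiteGraph :
    indepPoly (completeBipartiteGraph α β) =
      (X + 1) ^ Fintype.card α + (X + 1) ^ Fintype.card β - 1 := by
  classical
  set A := univ.map (.inl : α ↪ α ⊕ β)
  set B := univ.map (.inr : β ↪ α ⊕ β)
  have hsum : ∀ s : Finset (α ⊕ β), ∑ t ∈ s.powerset, (X : ℤ[X]) ^ t.card = (X + 1) ^ s.card :=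
    fun s => by simpa using sum_pow_mul_eq_add_pow (X : ℤ[X]) 1 s
  have hinter : A.powerset ∩ B.powerset = {∅} := by
    ext S
    rw [mem_inter, mem_powerset, mem_powerset, ← subset_inter_iff,
      disjoint_iff_inter_eq_empty.1 (disjoint_map_inl_map_inr _ _), subset_empty, mem_singleton]
  have hind : indepFinsets (completeBipartiteGraph α β) = A.powerset ∪ B.powerset := by
    ext S
    rw [mem_indepFinsets_s15, isIndepSet_completeBipartiteGraph_iff, mem_union, mem_powerset,
      mem_powerset]
  rw [indepPoly_eq_sum_indepFinsets, hind, eq_sub_iff_add_eq]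
  calc _ = ∑ S ∈ A.powerset ∪ B.powerset, X ^ S.card +
          ∑ S ∈ A.powerset ∩ B.powerset, X ^ S.card := by
        rw [hinter, sum_singleton, card_empty, pow_zero]
    _ = _ := by rw [sum_union_inter, hsum, hsum, card_map, card_map, card_univ, card_univ]

end CompleteBipartite

section kmnDel

variable {m n : ℕ} (u : ℕ → Fin m) (v : ℕ → Fin n)

lemma kmnDel_zero : kmnDel m n u v 0 = completeBipartiteGraph (Fin m) (Fin n) := by
  simp [kmnDel]

lemma kmnDel_succ (i : ℕ) :
    kmnDel m n u v (i + 1) =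
      (kmnDel m n u v i).deleteEdges {s(.inl (u i), .inr (v i))} := by
  rw [kmnDel, kmnDel, SimpleGraph.deleteEdges_deleteEdges]
  congr 1
  ext e
  simp only [Set.mem_union, Set.mem_ofPred_eq, Set.mem_singleton_iff, Nat.exists_lt_succ_right]

lemma kmnDel_adj {i : ℕ} (hi : ∀ j < i, u i = u j → v i ≠ v j) :
    (kmnDel m n u v i).Adj (.inl (u i)) (.inr (v i)) := by
  simpa [kmnDel] using hi

theorem eval_indepPoly_kmnDel (hm : 1 ≤ m) (hn : 1 ≤ n) (k : ℕ)
    (hdist : ∀ i < k, ∀ j < k, u i = u j → v i = v j → i = j) :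
    (indepPoly (kmnDel m n u v k)).eval (-1) =
      (∑ i ∈ range k,
        (indepPoly ((kmnDel m n u v i).induce
          ((kmnDel m n u v i).neighborSet (.inl (u i)) ∪
            (kmnDel m n u v i).neighborSet (.inr (v i)))ᶜ)).eval (-1)) - 1 := by
  induction k with
  | zero =>
    simp [kmnDel_zero, indepPoly_completeBipartiteGraph, Nat.one_le_iff_ne_zero.1 hm,
      Nat.one_le_iff_ne_zero.1 hn]
  | succ k ih =>
    have hadj := kmnDel_adj u v fun j hj hu hv => hj.ne' (hdist k (by omega) j (by omega) hu hv)
    rw [kmnDel_succ, indepPoly_deleteEdges_of_adj hadj, eval_add, eval_mul, eval_pow, eval_X,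
      neg_one_sq, one_mul, sum_range_succ, ih fun i hi j hj => hdist i (by omega) j (by omega)]
    ring

end kmnDel

lemma coeff_one_sub_X_pow {R : Type*} [CommRing R] (d : ℕ) :
    ((1 - X : R[X]) ^ d).coeff d = (-1) ^ d := by
  rw [show (1 - X : R[X]) = C (-1) * (X + C (-1)) by simp [C_neg]; ring, mul_pow, ← C_pow,
    coeff_C_mul, coeff_X_add_C_pow]
  simp

section HPoly

variable {V : Type*} [Fintype V] (G : SimpleGraph V)

lemma natDegree_hPoly_le : (hPoly G).natDegree ≤ indepNum G := by
  refine natDegree_sum_le_of_forall_le _ _ fun i hi => ?_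
  have hi : i ≤ indepNum G := mem_range_succ_iff.1 hi
  calc _ ≤ i + (indepNum G - i) := by compute_degree
    _ = indepNum G := by omega

lemma coeff_hPoly_indepNum :
    (hPoly G).coeff (indepNum G) = (-1) ^ indepNum G * (indepPoly G).eval (-1) := by
  rw [hPoly, finsetSum_coeff, indepPoly, eval_finsetSum, mul_sum]
  refine sum_congr rfl fun i hi => ?_
  obtain ⟨d, hd⟩ := Nat.exists_eq_add_of_le (mem_range_succ_iff.1 hi)
  rw [hd, Nat.add_sub_cancel_left, mul_assoc, coeff_C_mul, add_comm, coeff_X_pow_mul,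
    coeff_one_sub_X_pow]
  simp only [eval_mul, eval_C, eval_pow, eval_X]
  have hsq : ((-1 : ℤ) ^ i) * (-1) ^ i = 1 := pow_mul_pow_eq_one i (by norm_num)
  linear_combination (-(sCount G i * (-1) ^ d : ℤ)) * hsq

lemma sCount_zero : sCount G 0 = 1 := by
  rw [sCount, card_eq_one]
  refine ⟨∅, eq_singleton_iff_unique_mem.2 ⟨?_, fun S hS => card_eq_zero.1 (mem_filter.1 hS).2⟩⟩
  simp [mem_indepFinsets_s15, IsIndepSet]

lemma coeff_zero_hPoly : (hPoly G).coeff 0 = 1 := by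
  rw [coeff_zero_eq_eval_zero, hPoly, eval_finsetSum, sum_eq_single_of_mem 0 (by simp)]
  · simp [sCount_zero]
  · intro i _ hi
    simp [zero_pow hi]

theorem natDegree_hPoly_eq_indepNum_iff :
    (hPoly G).natDegree = indepNum G ↔ (indepPoly G).eval (-1) ≠ 0 := by
  have hne : hPoly G ≠ 0 := fun h => by simpa [h] using coeff_zero_hPoly G
  have hcoeff : (hPoly G).coeff (indepNum G) ≠ 0 ↔ (indepPoly G).eval (-1) ≠ 0 := by
    rw [coeff_hPoly_indepNum]
    exact mul_ne_zero_iff_left (pow_ne_zero _ (by norm_num))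
  rw [← hcoeff]
  exact ⟨fun h => h ▸ leadingCoeff_ne_zero.2 hne,
    natDegree_eq_of_le_of_coeff_ne_zero (natDegree_hPoly_le G)⟩

end HPoly

/-- Let `G = G_k` be obtained from `K_{m,n}` by successively deleting
distinct edges `a_1, …, a_k`, `a_i = {u_i, v_i}`.  Then
`I(G,-1) = Σ_{i=1}^{k} I(G_{i-1} - (N_{G_{i-1}}(u_i) ∪ N_{G_{i-1}}(v_i)), -1) - 1`;
consequently, if moreover every vertex of `G` has degree at least `2`, then
`deg h_G = α(G)` iff that sum is `≠ 1`. -/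
theorem eval_indepPoly_kmn_deleteEdges (m n k : ℕ) (hm : 1 ≤ m) (hn : 1 ≤ n)
    (u : ℕ → Fin m) (v : ℕ → Fin n)
    (hdist : ∀ i < k, ∀ j < k, u i = u j → v i = v j → i = j) :
    (indepPoly (kmnDel m n u v k)).eval (-1) =
      (∑ i ∈ Finset.range k,
        (indepPoly ((kmnDel m n u v i).induce
          (((kmnDel m n u v i).neighborSet (Sum.inl (u i)) ∪
            (kmnDel m n u v i).neighborSet (Sum.inr (v i)))ᶜ))).eval (-1)) - 1 ∧
    ((∀ w, 2 ≤ deg (kmnDel m n u v k) w) →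
      ((hPoly (kmnDel m n u v k)).natDegree = indepNum (kmnDel m n u v k) ↔
        (∑ i ∈ Finset.range k,
          (indepPoly ((kmnDel m n u v i).induce
            (((kmnDel m n u v i).neighborSet (Sum.inl (u i)) ∪
              (kmnDel m n u v i).neighborSet (Sum.inr (v i)))ᶜ))).eval (-1)) ≠ 1)) := by
  have heval := eval_indepPoly_kmnDel u v hm hn k hdist
  refine ⟨heval, fun _ => ?_⟩
  rw [natDegree_hPoly_eq_indepNum_iff, heval, sub_ne_zero]
end

section
/- Let m, n ≥ 1, and let a_1, …, a_k be pairwise vertex-disjoint edges (i.e., a matching) of the complete bipartite graph K_{m,n}, with k ≠ 1. Let G be the graph obtained from K_{m,n} by deleting the edges a_1, …, a_k, and assume every vertex of G has degree at least 2. Then deg h_G = α(G). -/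
open Finset Polynomial

lemma coeff_one_sub_X_pow_s16 (n : ℕ) : ((1 - X : Polynomial ℤ) ^ n).coeff n = (-1) ^ n := by
  have h : ((1 : Polynomial ℤ) - X) = -(X - C 1) := by rw [map_one]; ring
  rw [h, neg_pow, show ((-1 : Polynomial ℤ)) = C (-1) by simp, ← C_pow, coeff_C_mul]
  have hm : ((X - C (1:ℤ)) ^ n).Monic := (monic_X_sub_C (1:ℤ)).pow n
  have hd : ((X - C (1:ℤ)) ^ n).natDegree = n := by
    rw [natDegree_pow, natDegree_X_sub_C, mul_one]
  have := hm.coeff_natDegree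
  rw [hd] at this
  rw [this, mul_one]

lemma coeff_C_mul_X_pow_mul_one_sub (a : ℤ) (i M : ℕ) :
    (C a * X ^ i * (1 - X) ^ M).coeff (M + i) = a * (-1) ^ M := by
  rw [mul_assoc, Polynomial.coeff_C_mul, mul_comm (X ^ i), Polynomial.coeff_mul_X_pow,
    coeff_one_sub_X_pow_s16]

/-- Let `G` be obtained from `K_{m,n}` by deleting the edges
`a_1, …, a_k` of a matching (so the `u_i` are pairwise distinct and the `v_i` are
pairwise distinct), with `k ≠ 1`.  If every vertex of `G` has degree at least `2`,
then `deg h_G = α(G)`. -/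
theorem degree_hPoly_kmn_delete_matching (m n k : ℕ) (hm : 1 ≤ m) (hn : 1 ≤ n)
    (hk : k ≠ 1) (u : ℕ → Fin m) (v : ℕ → Fin n)
    (hu : ∀ i < k, ∀ j < k, u i = u j → i = j)
    (hv : ∀ i < k, ∀ j < k, v i = v j → i = j)
    (hdeg : ∀ w, 2 ≤ deg (kmnDel m n u v k) w) :
    (hPoly (kmnDel m n u v k)).natDegree = indepNum (kmnDel m n u v k) := by
  classical
  set G := kmnDel m n u v k with hGdef
  set N := indepNum G with hNdef
  -- adjacency facts
  have adj_lr : ∀ (a : Fin m) (b : Fin n),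
      G.Adj (Sum.inl a) (Sum.inr b) ↔ ¬ ∃ j, j < k ∧ a = u j ∧ b = v j := by
    intro a b
    simp only [hGdef, kmnDel, SimpleGraph.deleteEdges_adj, completeBipartiteGraph_adj,
      Sum.isLeft_inl, Sum.isRight_inr, Set.mem_setOf_eq, true_and, and_true,
      Sum.isRight_inl, Sum.isLeft_inr, and_false, false_and, or_false, true_or, true_and,
      true_iff]
    constructor
    · intro h ⟨j, hj, hj1, hj2⟩
      exact h ⟨j, hj, by rw [hj1, hj2]⟩
    · rintro h ⟨j, hj, hje⟩
      rw [Sym2.eq_iff] at hje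
      rcases hje with ⟨h1, h2⟩ | ⟨h1, h2⟩
      · exact h ⟨j, hj, Sum.inl.inj h1, Sum.inr.inj h2⟩
      · exact Sum.inl_ne_inr h1
  have adj_ll : ∀ (a a' : Fin m), ¬ G.Adj (Sum.inl a) (Sum.inl a') := by
    intro a a'
    simp [hGdef, kmnDel]
  have adj_rr : ∀ (b b' : Fin n), ¬ G.Adj (Sum.inr b) (Sum.inr b') := by
    intro b b'
    simp [hGdef, kmnDel]
  -- the three families
  set L : Finset (Fin m ⊕ Fin n) := Finset.univ.image Sum.inl with hLdef
  set R : Finset (Fin m ⊕ Fin n) := Finset.univ.image Sum.inr with hRdef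
  set P : Finset (Finset (Fin m ⊕ Fin n)) :=
    (Finset.range k).image (fun j => {Sum.inl (u j), Sum.inr (v j)}) with hPdef
  have memL : ∀ x, x ∈ L ↔ ∃ a, x = Sum.inl a := by
    intro x; simp [hLdef, eq_comm]
  have memR : ∀ x, x ∈ R ↔ ∃ b, x = Sum.inr b := by
    intro x; simp [hRdef, eq_comm]
  -- structure of independent sets
  have hstruct : indepFinsets G = (L.powerset ∪ R.powerset) ∪ P := by
    ext S
    simp only [indepFinsets, Finset.mem_filter, Finset.mem_univ, true_and,
      Finset.mem_union, Finset.mem_powerset, hPdef, Finset.mem_image, Finset.mem_range]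
    constructor
    · intro hS
      by_cases hL : ∀ x ∈ S, ∃ a, x = Sum.inl a
      · left; left
        intro x hx
        obtain ⟨a, rfl⟩ := hL x hx
        exact (memL _).mpr ⟨a, rfl⟩
      by_cases hR : ∀ x ∈ S, ∃ b, x = Sum.inr b
      · left; right
        intro x hx
        obtain ⟨b, rfl⟩ := hR x hx
        exact (memR _).mpr ⟨b, rfl⟩
      · push_neg at hL hR
        obtain ⟨x, hx, hx'⟩ := hL
        obtain ⟨y, hy, hy'⟩ := hR
        obtain ⟨b, rfl⟩ : ∃ b, x = Sum.inr b := by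
          cases x with
          | inl a => exact absurd rfl (hx' a)
          | inr b => exact ⟨b, rfl⟩
        obtain ⟨a, rfl⟩ : ∃ a, y = Sum.inl a := by
          cases y with
          | inl a => exact ⟨a, rfl⟩
          | inr b' => exact absurd rfl (hy' b')
        have hnadj := hS _ hy _ hx
        rw [adj_lr] at hnadj
        obtain ⟨j, hj, ha, hb⟩ := not_not.mp hnadj
        right
        refine ⟨j, hj, ?_⟩
        apply Finset.Subset.antisymm
        · intro z hz
          rcases Finset.mem_insert.mp hz with rfl | hz
          · rwa [← ha]
          · rw [Finset.mem_singleton.mp hz, ← hb]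
            exact hx
        · intro z hz
          cases z with
          | inl a' =>
            have h2 := hS _ hz _ hx
            rw [adj_lr] at h2
            obtain ⟨j', hj', ha', hb'⟩ := not_not.mp h2
            have : j' = j := hv j' hj' j hj (hb' ▸ hb ▸ rfl)
            subst this
            rw [ha']
            exact Finset.mem_insert_self _ _
          | inr b' =>
            have h2 := hS _ hy _ hz
            rw [adj_lr] at h2
            obtain ⟨j', hj', ha', hb'⟩ := not_not.mp h2
            have : j' = j := hu j' hj' j hj (ha' ▸ ha ▸ rfl)
            subst this
            rw [hb']
            exact Finset.mem_insert_of_mem (Finset.mem_singleton_self _)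
    · rintro ((hL | hR) | ⟨j, hj, rfl⟩)
      · intro x hx y hy
        obtain ⟨a, rfl⟩ := (memL _).mp (hL hx)
        obtain ⟨a', rfl⟩ := (memL _).mp (hL hy)
        exact adj_ll a a'
      · intro x hx y hy
        obtain ⟨b, rfl⟩ := (memR _).mp (hR hx)
        obtain ⟨b', rfl⟩ := (memR _).mp (hR hy)
        exact adj_rr b b'
      · intro x hx y hy
        have hlr : ¬ G.Adj (Sum.inl (u j)) (Sum.inr (v j)) := by
          rw [adj_lr]; exact not_not_intro ⟨j, hj, rfl, rfl⟩
        rcases Finset.mem_insert.mp hx with rfl | hx <;>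
          rcases Finset.mem_insert.mp hy with h | h
        · subst h; exact adj_ll _ _
        · rw [Finset.mem_singleton.mp h]; exact hlr
        · rw [Finset.mem_singleton.mp hx, h]
          exact fun hadj => hlr hadj.symm
        · rw [Finset.mem_singleton.mp hx, Finset.mem_singleton.mp h]
          exact adj_rr _ _
  -- the alternating sum over independent sets equals k - 1
  have hLne : L.Nonempty := by
    obtain ⟨a⟩ := Fin.pos_iff_nonempty.mp hm
    exact ⟨Sum.inl a, (memL _).mpr ⟨a, rfl⟩⟩
  have hRne : R.Nonempty := by
    obtain ⟨b⟩ := Fin.pos_iff_nonempty.mp hn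
    exact ⟨Sum.inr b, (memR _).mpr ⟨b, rfl⟩⟩
  have hinterLR : L.powerset ∩ R.powerset = {∅} := by
    ext S
    simp only [Finset.mem_inter, Finset.mem_powerset, Finset.mem_singleton]
    constructor
    · rintro ⟨h1, h2⟩
      rw [Finset.eq_empty_iff_forall_notMem]
      intro x hx
      obtain ⟨a, rfl⟩ := (memL _).mp (h1 hx)
      obtain ⟨b, hb⟩ := (memR _).mp (h2 hx)
      exact Sum.inl_ne_inr hb
    · rintro rfl
      exact ⟨Finset.empty_subset _, Finset.empty_subset _⟩
  have hdisjP : Disjoint (L.powerset ∪ R.powerset) P := by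
    rw [Finset.disjoint_left]
    intro S hS hSP
    obtain ⟨j, hj, rfl⟩ := Finset.mem_image.mp hSP
    rcases Finset.mem_union.mp hS with h | h
    · have := (memL _).mp ((Finset.mem_powerset.mp h)
        (Finset.mem_insert_of_mem (Finset.mem_singleton_self (Sum.inr (v j)))))
      obtain ⟨a, ha⟩ := this
      exact Sum.inl_ne_inr ha.symm
    · have := (memR _).mp ((Finset.mem_powerset.mp h)
        (Finset.mem_insert_self (Sum.inl (u j)) _))
      obtain ⟨b, hb⟩ := this
      exact Sum.inl_ne_inr hb
  have hsumP : ∑ S ∈ P, (-1 : ℤ) ^ S.card = k := by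
    rw [hPdef, Finset.sum_image]
    · have : ∀ j ∈ Finset.range k,
          (-1 : ℤ) ^ ({Sum.inl (u j), Sum.inr (v j)} : Finset (Fin m ⊕ Fin n)).card = 1 := by
        intro j hj
        rw [Finset.card_pair (Sum.inl_ne_inr)]
        norm_num
      rw [Finset.sum_congr rfl this, Finset.sum_const, Finset.card_range, nsmul_eq_mul, mul_one]
    · intro j hj j' hj' he
      have : Sum.inl (u j) ∈ ({Sum.inl (u j'), Sum.inr (v j')} : Finset (Fin m ⊕ Fin n)) := by
        simp only at he; rw [← he]; exact Finset.mem_insert_self _ _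
      rcases Finset.mem_insert.mp this with h | h
      · exact hu j (Finset.mem_range.mp hj) j' (Finset.mem_range.mp hj') (Sum.inl.inj h)
      · exact absurd (Finset.mem_singleton.mp h) Sum.inl_ne_inr
  have hsumLR : ∑ S ∈ L.powerset ∪ R.powerset, (-1 : ℤ) ^ S.card = -1 := by
    have h := Finset.sum_union_inter (s₁ := L.powerset) (s₂ := R.powerset)
      (f := fun S => (-1 : ℤ) ^ S.card)
    rw [hinterLR, Finset.sum_singleton, Finset.card_empty, pow_zero,
      Finset.sum_powerset_neg_one_pow_card_of_nonempty hLne,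
      Finset.sum_powerset_neg_one_pow_card_of_nonempty hRne] at h
    linarith
  have hsumIndep : ∑ S ∈ indepFinsets G, (-1 : ℤ) ^ S.card = (k : ℤ) - 1 := by
    rw [hstruct, Finset.sum_union hdisjP, hsumLR, hsumP]
    ring
  -- the alternating sum in terms of sCount
  have hcard : ∀ S ∈ indepFinsets G, S.card ∈ Finset.range (N + 1) := by
    intro S hS
    rw [Finset.mem_range, Nat.lt_succ_iff]
    exact Finset.le_sup hS
  have hfiber : ∑ i ∈ Finset.range (N + 1), (sCount G i : ℤ) * (-1) ^ i
      = ∑ S ∈ indepFinsets G, (-1 : ℤ) ^ S.card := by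
    rw [← Finset.sum_fiberwise_of_maps_to hcard (fun S => (-1 : ℤ) ^ S.card)]
    apply Finset.sum_congr rfl
    intro i _
    have : ∀ S ∈ (indepFinsets G).filter (fun S => S.card = i),
        (-1 : ℤ) ^ S.card = (-1) ^ i := by
      intro S hS
      rw [(Finset.mem_filter.mp hS).2]
    rw [Finset.sum_congr rfl this, Finset.sum_const, nsmul_eq_mul, sCount]
  -- compute the top coefficient
  have hcoeff : (hPoly G).coeff N = (-1) ^ N * ((k : ℤ) - 1) := by
    rw [hPoly, Polynomial.finset_sum_coeff, ← hNdef]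
    have : ∀ i ∈ Finset.range (N + 1),
        (C (sCount G i : ℤ) * X ^ i * (1 - X) ^ (N - i)).coeff N
          = (sCount G i : ℤ) * ((-1) ^ N * (-1) ^ i) := by
      intro i hi
      have hiN : i ≤ N := Nat.lt_succ_iff.mp (Finset.mem_range.mp hi)
      have hkey := coeff_C_mul_X_pow_mul_one_sub ((sCount G i : ℤ)) i (N - i)
      rw [Nat.sub_add_cancel hiN] at hkey
      rw [hkey]
      congr 1
      have h2 : N + i = (N - i) + 2 * i := by omega
      rw [← pow_add, h2, pow_add, pow_mul]
      norm_num
    rw [Finset.sum_congr rfl this]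
    calc ∑ i ∈ Finset.range (N + 1), (sCount G i : ℤ) * ((-1) ^ N * (-1) ^ i)
        = (-1) ^ N * ∑ i ∈ Finset.range (N + 1), (sCount G i : ℤ) * (-1) ^ i := by
          rw [Finset.mul_sum]
          exact Finset.sum_congr rfl fun i _ => by ring
      _ = (-1) ^ N * ((k : ℤ) - 1) := by rw [hfiber, hsumIndep]
  -- the coefficient is nonzero
  have hne : (hPoly G).coeff N ≠ 0 := by
    rw [hcoeff]
    apply mul_ne_zero
    · exact pow_ne_zero _ (by norm_num)
    · intro h
      apply hk
      omega
  -- natDegree bound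
  have hle : (hPoly G).natDegree ≤ N := by
    rw [hPoly, ← hNdef]
    apply Polynomial.natDegree_sum_le_of_forall_le
    intro i hi
    have hiN : i ≤ N := Nat.lt_succ_iff.mp (Finset.mem_range.mp hi)
    calc (C (sCount G i : ℤ) * X ^ i * (1 - X) ^ (N - i)).natDegree
        ≤ (C (sCount G i : ℤ) * X ^ i).natDegree + ((1 - X : Polynomial ℤ) ^ (N - i)).natDegree :=
          Polynomial.natDegree_mul_le
      _ ≤ i + (N - i) * 1 := by
          apply add_le_add (Polynomial.natDegree_C_mul_X_pow_le _ _)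
          apply (Polynomial.natDegree_pow_le).trans
          apply Nat.mul_le_mul_left
          apply (Polynomial.natDegree_sub_le _ _).trans
          simp
      _ ≤ N := by omega
  exact le_antisymm hle (Polynomial.le_natDegree_of_ne_zero hne)
end

section
/- Let m, n ≥ 1, let k be an even integer with k ≥ 6, and let a_1, …, a_k be the edges of a cycle of length k contained in the complete bipartite graph K_{m,n}. Let G be the graph obtained from K_{m,n} by deleting the edges a_1, …, a_k, and assume every vertex of G has degree at least 2. Then deg h_G = α(G). -/
open Finset Polynomial

/-- `kmnDelCycle m n l p q` is the graph obtained from the complete bipartite graph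
`K_{m,n}` by deleting the `2l` edges of the cycle
`inl (p 0), inr (q 0), inl (p 1), inr (q 1), …, inl (p (l-1)), inr (q (l-1)), inl (p 0)`. -/
def kmnDelCycle (m n l : ℕ) (p : ℕ → Fin m) (q : ℕ → Fin n) :
    SimpleGraph (Fin m ⊕ Fin n) :=
  (completeBipartiteGraph (Fin m) (Fin n)).deleteEdges
    {e | ∃ j < l, e = s(Sum.inl (p j), Sum.inr (q j)) ∨
                  e = s(Sum.inl (p ((j + 1) % l)), Sum.inr (q j))}

namespace Stmt17Aux

variable {m n l : ℕ} {p : ℕ → Fin m} {q : ℕ → Fin n}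

lemma not_adj_lr (a : Fin m) (b : Fin n) :
    ¬ (kmnDelCycle m n l p q).Adj (Sum.inl a) (Sum.inr b) ↔
      ∃ j < l, (a = p j ∧ b = q j) ∨ (a = p ((j+1)%l) ∧ b = q j) := by
  simp only [kmnDelCycle, SimpleGraph.deleteEdges_adj, Sym2.eq_iff]
  simp
  constructor <;> rintro ⟨j, hj, h⟩ <;> exact ⟨j, hj, by tauto⟩

lemma not_adj_ll (a a' : Fin m) :
    ¬ (kmnDelCycle m n l p q).Adj (Sum.inl a) (Sum.inl a') := by
  simp [kmnDelCycle, SimpleGraph.deleteEdges_adj]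

lemma not_adj_rr (b b' : Fin n) :
    ¬ (kmnDelCycle m n l p q).Adj (Sum.inr b) (Sum.inr b') := by
  simp [kmnDelCycle, SimpleGraph.deleteEdges_adj]

/-- common cycle-"non-neighbors" on the right of a left set `A` -/
noncomputable def CB (m n l : ℕ) (p : ℕ → Fin m) (q : ℕ → Fin n) (A : Finset (Fin m)) :
    Finset (Fin n) :=
  @Finset.filter _
    (fun b => ∀ a ∈ A, ¬ (kmnDelCycle m n l p q).Adj (Sum.inl a) (Sum.inr b))
    (Classical.decPred _) Finset.univ

lemma mem_CB {A : Finset (Fin m)} {b : Fin n} :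
    b ∈ CB m n l p q A ↔
      ∀ a ∈ A, ¬ (kmnDelCycle m n l p q).Adj (Sum.inl a) (Sum.inr b) := by
  simp [CB, Finset.mem_filter]

lemma mod_succ_lt (hj : j < l) : (j + 1) % l < l := Nat.mod_lt _ (by omega)

lemma mod_succ_ne (hl : 2 ≤ l) (hj : j < l) : (j + 1) % l ≠ j := by
  have h : (j+1) % l = if j+1 = l then 0 else j+1 := by
    split
    · simp [*]
    · exact Nat.mod_eq_of_lt (by omega)
  split_ifs at h <;> omega

lemma mod_succ_inj (hl : 0 < l) (hi : i < l) (hj : j < l)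
    (h : (i + 1) % l = (j + 1) % l) : i = j := by
  have h1 : (i+1) % l = if i+1 = l then 0 else i+1 := by
    split
    · simp [*]
    · exact Nat.mod_eq_of_lt (by omega)
  have h2 : (j+1) % l = if j+1 = l then 0 else j+1 := by
    split
    · simp [*]
    · exact Nat.mod_eq_of_lt (by omega)
  split_ifs at h1 h2 <;> omega

lemma CB_nonempty_iff (hn : 1 ≤ n) (hl : 3 ≤ l)
    (hq : ∀ i < l, ∀ j < l, q i = q j → i = j) (A : Finset (Fin m)) :
    (CB m n l p q A).Nonempty ↔
      A = ∅ ∨ (∃ j < l, A = {p j}) ∨ (∃ j < l, A = ({p j, p ((j+1)%l)} : Finset (Fin m))) := by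
  constructor
  · rintro ⟨b, hb⟩
    rw [mem_CB] at hb
    rcases A.eq_empty_or_nonempty with hA | ⟨a₀, ha₀⟩
    · exact Or.inl hA
    right
    obtain ⟨j₀, hj₀, hcase⟩ := (not_adj_lr a₀ b).1 (hb a₀ ha₀)
    have hbq : b = q j₀ := by tauto
    have hsub : A ⊆ ({p j₀, p ((j₀+1)%l)} : Finset (Fin m)) := by
      intro a ha
      obtain ⟨j, hj, hc⟩ := (not_adj_lr a b).1 (hb a ha)
      have : b = q j := by tauto
      have hjj : j = j₀ := hq j hj j₀ hj₀ (by rw [← this, ← hbq])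
      subst hjj
      simp only [Finset.mem_insert, Finset.mem_singleton]
      tauto
    have := hsub ha₀
    -- A is a nonempty subset of a pair
    by_cases h1 : p j₀ ∈ A <;> by_cases h2 : p ((j₀+1)%l) ∈ A
    · exact Or.inr ⟨j₀, hj₀, Finset.Subset.antisymm hsub (by
        intro x hx; simp only [Finset.mem_insert, Finset.mem_singleton] at hx
        rcases hx with rfl | rfl <;> assumption)⟩
    · refine Or.inl ⟨j₀, hj₀, Finset.Subset.antisymm ?_ (by simpa)⟩
      intro x hx
      have := hsub hx
      simp only [Finset.mem_insert, Finset.mem_singleton] at this ⊢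
      rcases this with rfl | rfl
      · rfl
      · exact absurd hx h2
    · refine Or.inl ⟨(j₀+1)%l, mod_succ_lt hj₀, Finset.Subset.antisymm ?_ (by simpa)⟩
      intro x hx
      have := hsub hx
      simp only [Finset.mem_singleton]
      rcases Finset.mem_insert.1 this with rfl | h
      · exact absurd hx h1
      · exact Finset.mem_singleton.1 h
    · exfalso
      rcases Finset.mem_insert.1 (hsub ha₀) with rfl | h
      · exact h1 ha₀
      · exact h2 (Finset.mem_singleton.1 h ▸ ha₀)
  · rintro (rfl | ⟨j, hj, rfl⟩ | ⟨j, hj, rfl⟩)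
    · obtain ⟨b⟩ : Nonempty (Fin n) := ⟨⟨0, hn⟩⟩
      exact ⟨b, mem_CB.2 (by simp)⟩
    · refine ⟨q j, mem_CB.2 ?_⟩
      intro a ha
      rw [Finset.mem_singleton] at ha
      subst ha
      exact (not_adj_lr _ _).2 ⟨j, hj, Or.inl ⟨rfl, rfl⟩⟩
    · refine ⟨q j, mem_CB.2 ?_⟩
      intro a ha
      rcases Finset.mem_insert.1 ha with rfl | ha
      · exact (not_adj_lr _ _).2 ⟨j, hj, Or.inl ⟨rfl, rfl⟩⟩
      · rw [Finset.mem_singleton] at ha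
        subst ha
        exact (not_adj_lr _ _).2 ⟨j, hj, Or.inr ⟨rfl, rfl⟩⟩


lemma mod_succ_succ_ne (hl : 3 ≤ l) (hx : x < l) : ((x + 1) % l + 1) % l ≠ x := by
  have h1 : (x+1) % l = if x+1 = l then 0 else x+1 := by
    split
    · simp [*]
    · exact Nat.mod_eq_of_lt (by omega)
  have h2 : ((x+1)%l + 1) % l = if (x+1)%l + 1 = l then 0 else (x+1)%l + 1 := by
    split
    · rename_i h; rw [h, Nat.mod_self]
    · exact Nat.mod_eq_of_lt (by
        have : (x+1) % l < l := Nat.mod_lt _ (by omega)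
        omega)
  split_ifs at h1 h2 <;> omega

/-- the collection of left sets with a common non-neighbor on the right -/
noncomputable def goods (m l : ℕ) (p : ℕ → Fin m) : Finset (Finset (Fin m)) :=
  insert (∅ : Finset (Fin m))
    (((Finset.range l).image fun j => ({p j} : Finset (Fin m))) ∪
     ((Finset.range l).image fun j => ({p j, p ((j+1)%l)} : Finset (Fin m))))

lemma pair_card (hl : 3 ≤ l) (hp : ∀ i < l, ∀ j < l, p i = p j → i = j)
    (j : ℕ) (hj : j < l) : ({p j, p ((j+1)%l)} : Finset (Fin m)).card = 2 := by
  rw [Finset.card_insert_of_notMem, Finset.card_singleton]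
  rw [Finset.mem_singleton]
  intro h
  exact mod_succ_ne (by omega) hj (hp j hj _ (mod_succ_lt hj) h).symm

lemma sum_goods (hl : 3 ≤ l) (hp : ∀ i < l, ∀ j < l, p i = p j → i = j) :
    ∑ A ∈ goods m l p, (-1 : ℤ) ^ A.card = 1 := by
  have hpc := pair_card hl hp
  have hdisj : Disjoint ((Finset.range l).image fun j => ({p j} : Finset (Fin m)))
      ((Finset.range l).image fun j => ({p j, p ((j+1)%l)} : Finset (Fin m))) := by
    rw [Finset.disjoint_left]
    rintro A hA hA'
    simp only [Finset.mem_image, Finset.mem_range] at hA hA'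
    obtain ⟨j, hj, rfl⟩ := hA
    obtain ⟨i, hi, hAi⟩ := hA'
    have hc := congrArg Finset.card hAi
    rw [hpc i hi] at hc
    simp at hc
  have hnotmem : (∅ : Finset (Fin m)) ∉
      ((Finset.range l).image fun j => ({p j} : Finset (Fin m))) ∪
      ((Finset.range l).image fun j => ({p j, p ((j+1)%l)} : Finset (Fin m))) := by
    simp only [Finset.mem_union, Finset.mem_image, Finset.mem_range, not_or, not_exists,
      not_and]
    refine ⟨fun j hj h => ?_, fun j hj h => ?_⟩
    · have hc := congrArg Finset.card h
      simp at hc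
    · have hc := congrArg Finset.card h
      rw [hpc j hj] at hc
      simp at hc
  rw [goods, Finset.sum_insert hnotmem, Finset.sum_union hdisj,
    Finset.sum_image, Finset.sum_image]
  · have e1 : ∑ j ∈ Finset.range l, (-1:ℤ) ^ ({p j} : Finset (Fin m)).card
        = ∑ j ∈ Finset.range l, (-1:ℤ) := by
      apply Finset.sum_congr rfl
      intro j hj
      simp
    have e2 : ∑ j ∈ Finset.range l, (-1:ℤ) ^ ({p j, p ((j+1)%l)} : Finset (Fin m)).card
        = ∑ j ∈ Finset.range l, 1 := by
      apply Finset.sum_congr rfl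
      intro j hj
      rw [hpc j (Finset.mem_range.1 hj)]
      norm_num
    rw [e1, e2]
    simp
  · -- injectivity of pairs
    intro x hx y hy hxy
    rw [Finset.mem_coe, Finset.mem_range] at hx hy
    beta_reduce at hxy
    have hx1 : p x ∈ ({p y, p ((y+1)%l)} : Finset (Fin m)) := by
      rw [← hxy]; exact Finset.mem_insert_self _ _
    rcases Finset.mem_insert.1 hx1 with h | h
    · exact hp x hx y hy h
    · rw [Finset.mem_singleton] at h
      have hxy1 : x = (y+1) % l := hp x hx _ (mod_succ_lt hy) h
      have hx2 : p ((x+1)%l) ∈ ({p y, p ((y+1)%l)} : Finset (Fin m)) := by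
        rw [← hxy]
        exact Finset.mem_insert_of_mem (Finset.mem_singleton_self _)
      rcases Finset.mem_insert.1 hx2 with h2 | h2
      · exfalso
        have : (x+1)%l = y := hp _ (mod_succ_lt hx) y hy h2
        subst hxy1
        exact mod_succ_succ_ne hl hy this
      · rw [Finset.mem_singleton] at h2
        exact mod_succ_inj (by omega) hx hy (hp _ (mod_succ_lt hx) _ (mod_succ_lt hy) h2)
  · -- injectivity of singletons
    intro x hx y hy hxy
    rw [Finset.mem_coe, Finset.mem_range] at hx hy
    exact hp x hx y hy (Finset.singleton_injective hxy)

lemma key_sum (hm : 1 ≤ m) (hn : 1 ≤ n) (hl : 3 ≤ l)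
    (hp : ∀ i < l, ∀ j < l, p i = p j → i = j)
    (hq : ∀ i < l, ∀ j < l, q i = q j → i = j) :
    ∑ S ∈ indepFinsets (kmnDelCycle m n l p q), (-1 : ℤ) ^ S.card = -1 := by
  classical
  have hmemindep : ∀ S, S ∈ indepFinsets (kmnDelCycle m n l p q) ↔
      IsIndepSet (kmnDelCycle m n l p q) S := by
    intro S
    simp [indepFinsets, Finset.mem_filter]
  have step1 : ∑ S ∈ indepFinsets (kmnDelCycle m n l p q), (-1:ℤ)^S.card
      = ∑ ab ∈ (Finset.univ : Finset (Finset (Fin m) × Finset (Fin n))).filter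
          (fun ab => ab.2 ⊆ CB m n l p q ab.1), (-1:ℤ)^(ab.1.card + ab.2.card) := by
    refine Finset.sum_nbij' (fun S => (S.toLeft, S.toRight))
      (fun ab => ab.1.disjSum ab.2) ?_ ?_ ?_ ?_ ?_
    · intro S hS
      rw [hmemindep] at hS
      simp only [Finset.mem_filter, Finset.mem_univ, true_and]
      intro b hb
      rw [Finset.mem_toRight] at hb
      rw [mem_CB]
      intro a ha
      exact hS _ (Finset.mem_toLeft.1 ha) _ hb
    · intro ab hab
      simp only [Finset.mem_filter, Finset.mem_univ, true_and] at hab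
      rw [hmemindep]
      rintro (a | b) hu (a' | b') hv
      · exact not_adj_ll a a'
      · rw [Finset.inl_mem_disjSum] at hu
        rw [Finset.inr_mem_disjSum] at hv
        exact mem_CB.1 (hab hv) a hu
      · rw [Finset.inr_mem_disjSum] at hu
        rw [Finset.inl_mem_disjSum] at hv
        exact fun h => mem_CB.1 (hab hu) a' hv h.symm
      · exact not_adj_rr b b'
    · intro S _
      exact Finset.toLeft_disjSum_toRight
    · intro ab _
      simp
    · intro S _
      rw [Finset.card_toLeft_add_card_toRight]
  rw [step1, Finset.sum_filter, Fintype.sum_prod_type]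
  have inner : ∀ A : Finset (Fin m),
      (∑ B : Finset (Fin n), if B ⊆ CB m n l p q A then (-1:ℤ)^(A.card + B.card) else 0)
      = (-1:ℤ)^A.card * (if CB m n l p q A = ∅ then 1 else 0) := by
    intro A
    rw [← Finset.sum_filter]
    have : (Finset.univ.filter (fun B => B ⊆ CB m n l p q A))
        = (CB m n l p q A).powerset := by
      ext B
      simp [Finset.mem_powerset]
    rw [this]
    have : ∀ B ∈ (CB m n l p q A).powerset, (-1:ℤ)^(A.card + B.card)
        = (-1:ℤ)^A.card * (-1:ℤ)^B.card := fun B _ => pow_add _ _ _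
    rw [Finset.sum_congr rfl this, ← Finset.mul_sum, Finset.sum_powerset_neg_one_pow_card]
  rw [Finset.sum_congr rfl (fun A _ => inner A)]
  have split : ∀ A : Finset (Fin m),
      (-1:ℤ)^A.card * (if CB m n l p q A = ∅ then 1 else 0)
      = (-1:ℤ)^A.card - (if (CB m n l p q A).Nonempty then (-1:ℤ)^A.card else 0) := by
    intro A
    by_cases h : CB m n l p q A = ∅ <;>
      simp [h, Finset.nonempty_iff_ne_empty]
  rw [Finset.sum_congr rfl (fun A _ => split A), Finset.sum_sub_distrib]
  have first : ∑ A : Finset (Fin m), (-1:ℤ)^A.card = 0 := by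
    rw [← Finset.powerset_univ, Finset.sum_powerset_neg_one_pow_card, if_neg]
    have : Nonempty (Fin m) := ⟨⟨0, hm⟩⟩
    exact Finset.nonempty_iff_ne_empty.1 Finset.univ_nonempty
  have second : ∑ A : Finset (Fin m),
      (if (CB m n l p q A).Nonempty then (-1:ℤ)^A.card else 0) = 1 := by
    rw [← Finset.sum_filter]
    have hgf : Finset.univ.filter (fun A => (CB m n l p q A).Nonempty) = goods m l p := by
      ext A
      rw [Finset.mem_filter]
      simp only [Finset.mem_univ, true_and]
      rw [CB_nonempty_iff hn hl hq]
      simp only [goods, Finset.mem_insert, Finset.mem_union, Finset.mem_image,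
        Finset.mem_range]
      refine or_congr Iff.rfl (or_congr ?_ ?_) <;>
        exact ⟨fun ⟨j, hj, h⟩ => ⟨j, hj, h.symm⟩, fun ⟨j, hj, h⟩ => ⟨j, hj, h.symm⟩⟩
    rw [hgf]
    exact sum_goods hl hp
  rw [first, second]
  norm_num


lemma alt_sum {V : Type*} [Fintype V] (G : SimpleGraph V) :
    ∑ i ∈ Finset.range (indepNum G + 1), (-1 : ℤ)^i * (sCount G i : ℤ)
      = ∑ S ∈ indepFinsets G, (-1 : ℤ)^S.card := by
  classical
  rw [← Finset.sum_fiberwise_of_maps_to (g := fun S : Finset V => S.card)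
    (t := Finset.range (indepNum G + 1))
    (fun S hS => Finset.mem_range.2 (Nat.lt_succ_of_le (Finset.le_sup hS)))]
  apply Finset.sum_congr rfl
  intro i _
  have : ∀ S ∈ (indepFinsets G).filter (fun S => S.card = i),
      (-1 : ℤ)^S.card = (-1 : ℤ)^i := by
    intro S hS
    rw [(Finset.mem_filter.1 hS).2]
  rw [Finset.sum_congr rfl this, Finset.sum_const, sCount]
  push_cast
  ring

lemma coeff_one_sub_pow (d : ℕ) : ((1 - X : Polynomial ℤ)^d).coeff d = (-1)^d := by
  rw [show (1 - X : Polynomial ℤ) = -(X - C 1) by rw [C_1]; ring, neg_pow,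
    show ((-1 : Polynomial ℤ))^d = C ((-1 : ℤ)^d) by rw [map_pow, map_neg, map_one],
    coeff_C_mul]
  have hm : ((X - C (1:ℤ))^d).Monic := (monic_X_sub_C 1).pow d
  have hd : ((X - C (1:ℤ))^d).natDegree = d := by
    rw [natDegree_pow, natDegree_X_sub_C, mul_one]
  have h1 := hm.coeff_natDegree
  rw [hd] at h1
  rw [h1, mul_one]

lemma natDegree_hPoly_le {V : Type*} [Fintype V] (G : SimpleGraph V) :
    (hPoly G).natDegree ≤ indepNum G := by
  apply natDegree_sum_le_of_forall_le
  intro i hi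
  rw [Finset.mem_range] at hi
  calc (C ((sCount G i : ℤ)) * X ^ i * (1 - X) ^ (indepNum G - i)).natDegree
      ≤ (C ((sCount G i : ℤ)) * X ^ i).natDegree + ((1 - X : Polynomial ℤ) ^ (indepNum G - i)).natDegree :=
        natDegree_mul_le
    _ ≤ i + (indepNum G - i) := by
        gcongr
        · calc (C ((sCount G i : ℤ)) * X ^ i).natDegree
              ≤ (C ((sCount G i : ℤ))).natDegree + (X ^ i : Polynomial ℤ).natDegree := natDegree_mul_le
          _ ≤ i := by simp
        · calc ((1 - X : Polynomial ℤ) ^ (indepNum G - i)).natDegree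
              ≤ (indepNum G - i) * (1 - X : Polynomial ℤ).natDegree := natDegree_pow_le
          _ ≤ indepNum G - i := by
              rw [show (1 - X : Polynomial ℤ) = -(X - C 1) by rw [C_1]; ring, natDegree_neg,
                natDegree_X_sub_C, mul_one]
    _ ≤ indepNum G := by omega

lemma coeff_hPoly_top {V : Type*} [Fintype V] (G : SimpleGraph V) :
    (hPoly G).coeff (indepNum G)
      = (-1 : ℤ)^(indepNum G) * ∑ i ∈ Finset.range (indepNum G + 1),
          (-1 : ℤ)^i * (sCount G i : ℤ) := by
  rw [hPoly, finset_sum_coeff, Finset.mul_sum]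
  apply Finset.sum_congr rfl
  intro i hi
  rw [Finset.mem_range] at hi
  have hile : i ≤ indepNum G := by omega
  have hterm := coeff_X_pow_mul ((1 - X : Polynomial ℤ) ^ (indepNum G - i)) i (indepNum G - i)
  rw [Nat.sub_add_cancel hile] at hterm
  rw [mul_assoc, coeff_C_mul, hterm, coeff_one_sub_pow]
  have hsign : (-1 : ℤ)^(indepNum G - i) = (-1 : ℤ)^(indepNum G) * (-1 : ℤ)^i := by
    have h2 : (-1 : ℤ)^(indepNum G - i) * (-1 : ℤ)^i = (-1 : ℤ)^(indepNum G) := by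
      rw [← pow_add, Nat.sub_add_cancel hile]
    have h3 : (-1 : ℤ)^i * (-1 : ℤ)^i = 1 := by
      rw [← pow_add, ← two_mul, pow_mul]
      norm_num
    calc (-1 : ℤ)^(indepNum G - i) = (-1 : ℤ)^(indepNum G - i) * ((-1 : ℤ)^i * (-1 : ℤ)^i) := by
          rw [h3, mul_one]
      _ = ((-1 : ℤ)^(indepNum G - i) * (-1 : ℤ)^i) * (-1 : ℤ)^i := by ring
      _ = (-1 : ℤ)^(indepNum G) * (-1 : ℤ)^i := by rw [h2]
  rw [hsign]
  ring

end Stmt17Aux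

/-- Let `k ≥ 6` be even and let `G` be obtained from `K_{m,n}` by
deleting the `k` edges of a cycle of length `k` in `K_{m,n}` (with distinct vertices
`inl (p 0), inr (q 0), …, inl (p (k/2 - 1)), inr (q (k/2 - 1))`).  If every vertex of `G`
has degree at least `2`, then `deg h_G = α(G)`. -/
theorem degree_hPoly_kmn_delete_cycle (m n k : ℕ) (hm : 1 ≤ m) (hn : 1 ≤ n)
    (hkeven : k % 2 = 0) (hk : 6 ≤ k) (p : ℕ → Fin m) (q : ℕ → Fin n)
    (hp : ∀ i < k / 2, ∀ j < k / 2, p i = p j → i = j)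
    (hq : ∀ i < k / 2, ∀ j < k / 2, q i = q j → i = j)
    (hdeg : ∀ w, 2 ≤ deg (kmnDelCycle m n (k / 2) p q) w) :
    (hPoly (kmnDelCycle m n (k / 2) p q)).natDegree =
      indepNum (kmnDelCycle m n (k / 2) p q) := by
  have hl : 3 ≤ k / 2 := by omega
  have hsum : ∑ i ∈ Finset.range (indepNum (kmnDelCycle m n (k / 2) p q) + 1),
      (-1 : ℤ)^i * (sCount (kmnDelCycle m n (k / 2) p q) i : ℤ) = -1 := by
    rw [Stmt17Aux.alt_sum]
    exact Stmt17Aux.key_sum hm hn hl hp hq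
  have hc : (hPoly (kmnDelCycle m n (k / 2) p q)).coeff
      (indepNum (kmnDelCycle m n (k / 2) p q)) ≠ 0 := by
    rw [Stmt17Aux.coeff_hPoly_top, hsum]
    exact mul_ne_zero (pow_ne_zero _ (by norm_num)) (by norm_num)
  exact le_antisymm (Stmt17Aux.natDegree_hPoly_le _) (le_natDegree_of_ne_zero hc)
end
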